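/- arXiv:2504.21350 — 5 statements merged into one kernel-verified Lean document; each statement's English description precedes it below -/
import Mathlib

section
/- There exists a real constant c ≠ 0, independent of k and l, such that for all k, l ∈ ℤ²₊ the vector field b(e_k⁰, e_l¹) + b(e_l¹, e_k⁰) + b(e_l⁰, e_k¹) + b(e_k¹, e_l⁰) equals a(k,l) · c · ((|l|² − |k|²)/|k+l|) · e⁰_{k+l} modulo a gradient. (This is the first identity of the velocity-direction Lie bracket lemma: J_{k,l}^{0,1} + J_{l,k}^{0,1} = a c ((|l|²−|k|²)/|k+l|) ψ⁰_{k+l}.) -/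
/-- Euclidean norm of an integer lattice vector `k ∈ ℤ²`. -/
noncomputable def knorm (k : ℤ × ℤ) : ℝ := Real.sqrt ((k.1 : ℝ) ^ 2 + (k.2 : ℝ) ^ 2)

/-- The phase `k ⋅ x = k₁ x₁ + k₂ x₂`. -/
noncomputable def phase (k : ℤ × ℤ) (x : ℝ × ℝ) : ℝ := (k.1 : ℝ) * x.1 + (k.2 : ℝ) * x.2

/-- The divergence-free trigonometric vector field
`e_k⁰(x) = |k|⁻¹ (k₂, −k₁) cos(k ⋅ x)`. -/
noncomputable def e0 (k : ℤ × ℤ) (x : ℝ × ℝ) : ℝ × ℝ :=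
  (((k.2 : ℝ) / knorm k) * Real.cos (phase k x),
   ((-(k.1 : ℝ)) / knorm k) * Real.cos (phase k x))

/-- The divergence-free trigonometric vector field
`e_k¹(x) = |k|⁻¹ (−k₂, k₁) sin(k ⋅ x)`. -/
noncomputable def e1 (k : ℤ × ℤ) (x : ℝ × ℝ) : ℝ × ℝ :=
  (((-(k.2 : ℝ)) / knorm k) * Real.sin (phase k x),
   ((k.1 : ℝ) / knorm k) * Real.sin (phase k x))

/-- The advection operator `b(u,v) = (u ⋅ ∇)v`, i.e. the derivative of `v`
in the direction `u(x)`. -/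
noncomputable def advect (u v : ℝ × ℝ → ℝ × ℝ) (x : ℝ × ℝ) : ℝ × ℝ :=
  fderiv ℝ v x (u x)

/-- The coefficient `a(k,l) = ⟨k, l^⊥⟩ / (|k| |l|)` with `l^⊥ = (−l₂, l₁)`. -/
noncomputable def acoef (k l : ℤ × ℤ) : ℝ :=
  ((k.1 : ℝ) * (-(l.2 : ℝ)) + (k.2 : ℝ) * (l.1 : ℝ)) / (knorm k * knorm l)

/-- The half lattice `ℤ²₊ = {j ∈ ℤ² \ {0} : j₁ > 0, or j₁ = 0 and j₂ > 0}`. -/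
def Zpos : Set (ℤ × ℤ) := {j | 0 < j.1 ∨ (j.1 = 0 ∧ 0 < j.2)}

/-- `F` equals `G` modulo a gradient: there exists a smooth `2π`-periodic
function `p : ℝ² → ℝ` with `F = G + ∇p`. -/
def EqModGrad (F G : ℝ × ℝ → ℝ × ℝ) : Prop :=
  ∃ p : ℝ × ℝ → ℝ, ContDiff ℝ (⊤ : ℕ∞) p ∧
    (∀ x : ℝ × ℝ, p (x.1 + 2 * Real.pi, x.2) = p x ∧ p (x.1, x.2 + 2 * Real.pi) = p x) ∧
    ∀ x : ℝ × ℝ, F x = G x + (fderiv ℝ p x (1, 0), fderiv ℝ p x (0, 1))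

/-! ### Auxiliary lemmas -/

/-- The phase as a continuous linear map. -/
noncomputable def phaseL (m : ℤ × ℤ) : ℝ × ℝ →L[ℝ] ℝ :=
  (m.1 : ℝ) • (ContinuousLinearMap.fst ℝ ℝ ℝ) + (m.2 : ℝ) • (ContinuousLinearMap.snd ℝ ℝ ℝ)

lemma phaseL_apply (m : ℤ × ℤ) (w : ℝ × ℝ) :
    phaseL m w = (m.1 : ℝ) * w.1 + (m.2 : ℝ) * w.2 := by
  simp [phaseL, smul_eq_mul]

lemma phase_eq_phaseL (m : ℤ × ℤ) : phase m = ⇑(phaseL m) := by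
  funext w; simp [phase, phaseL_apply]

lemma hasFDerivAt_phase (m : ℤ × ℤ) (x : ℝ × ℝ) :
    HasFDerivAt (phase m) (phaseL m) x := by
  rw [phase_eq_phaseL]; exact (phaseL m).hasFDerivAt

lemma hasFDerivAt_e0 (k : ℤ × ℤ) (x : ℝ × ℝ) :
    HasFDerivAt (e0 k)
      (((((k.2 : ℝ) / knorm k)) • ((-Real.sin (phase k x)) • phaseL k)).prod
       ((((-(k.1 : ℝ)) / knorm k)) • ((-Real.sin (phase k x)) • phaseL k))) x := by
  unfold e0
  exact HasFDerivAt.prodMk ((hasFDerivAt_phase k x).cos.const_mul _)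
    ((hasFDerivAt_phase k x).cos.const_mul _)

lemma hasFDerivAt_e1 (k : ℤ × ℤ) (x : ℝ × ℝ) :
    HasFDerivAt (e1 k)
      (((((-(k.2 : ℝ)) / knorm k)) • ((Real.cos (phase k x)) • phaseL k)).prod
       ((((k.1 : ℝ) / knorm k)) • ((Real.cos (phase k x)) • phaseL k))) x := by
  unfold e1
  exact HasFDerivAt.prodMk ((hasFDerivAt_phase k x).sin.const_mul _)
    ((hasFDerivAt_phase k x).sin.const_mul _)

lemma knorm_sq (k : ℤ × ℤ) : knorm k ^ 2 = (k.1 : ℝ) ^ 2 + (k.2 : ℝ) ^ 2 :=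
  Real.sq_sqrt (by positivity)

lemma knorm_pos {k : ℤ × ℤ} (hk : k ∈ Zpos) : 0 < knorm k := by
  have h : (0 : ℝ) < (k.1 : ℝ) ^ 2 + (k.2 : ℝ) ^ 2 := by
    rcases hk with h | ⟨h1, h2⟩
    · have h0 : (0 : ℝ) < (k.1 : ℝ) := by exact_mod_cast h
      nlinarith [sq_nonneg ((k.2 : ℝ))]
    · have h0 : (0 : ℝ) < (k.2 : ℝ) := by exact_mod_cast h2
      nlinarith [sq_nonneg ((k.1 : ℝ))]
  exact Real.sqrt_pos.mpr h

lemma Zpos_add {k l : ℤ × ℤ} (hk : k ∈ Zpos) (hl : l ∈ Zpos) : k + l ∈ Zpos := by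
  rcases hk with h | ⟨h1, h2⟩ <;> rcases hl with h' | ⟨h1', h2'⟩
  · exact Or.inl (by simp [Prod.fst_add]; omega)
  · exact Or.inl (by simp [Prod.fst_add]; omega)
  · exact Or.inl (by simp [Prod.fst_add]; omega)
  · exact Or.inr ⟨by simp [Prod.fst_add]; omega, by simp [Prod.snd_add]; omega⟩

lemma phase_add (k l : ℤ × ℤ) (x : ℝ × ℝ) :
    phase (k + l) x = phase k x + phase l x := by
  simp only [phase, Prod.fst_add, Prod.snd_add]
  push_cast; ring

set_option maxHeartbeats 4000000 in
theorem velocity_lie_bracket_sum_plus :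
    ∃ c : ℝ, c ≠ 0 ∧ ∀ k l : ℤ × ℤ, k ∈ Zpos → l ∈ Zpos →
      EqModGrad
        (fun x => advect (e0 k) (e1 l) x + advect (e1 l) (e0 k) x + advect (e0 l) (e1 k) x + advect (e1 k) (e0 l) x)
        (fun x => (acoef k l * c * ((knorm l ^ 2 - knorm k ^ 2) / knorm (k + l))) • e0 (k + l) x) := by
  refine ⟨-1, by norm_num, fun k l hk hl => ?_⟩
  set d : ℝ := (k.1 : ℝ) * (l.2 : ℝ) - (k.2 : ℝ) * (l.1 : ℝ) with hd
  set C : ℝ := 2 * d ^ 2 / (knorm k * knorm l * knorm (k + l) ^ 2) with hC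
  refine ⟨fun y => C * Real.sin (phase (k + l) y), ?_, ?_, ?_⟩
  · exact contDiff_const.mul (Real.contDiff_sin.comp (by rw [phase_eq_phaseL]; exact (phaseL (k+l)).contDiff))
  · intro x
    constructor
    · have h : phase (k+l) (x.1 + 2 * Real.pi, x.2) = phase (k+l) x + ((k+l).1 : ℤ) * (2 * Real.pi) := by
        simp [phase]; ring
      simp only [h, Real.sin_add_int_mul_two_pi]
    · have h : phase (k+l) (x.1, x.2 + 2 * Real.pi) = phase (k+l) x + ((k+l).2 : ℤ) * (2 * Real.pi) := by
        simp [phase]; ring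
      simp only [h, Real.sin_add_int_mul_two_pi]
  · intro x
    have hp : HasFDerivAt (fun y => C * Real.sin (phase (k + l) y))
        (C • ((Real.cos (phase (k + l) x)) • phaseL (k + l))) x :=
      (hasFDerivAt_phase (k + l) x).sin.const_mul _
    have hK0 : knorm k ≠ 0 := (knorm_pos hk).ne'
    have hL0 : knorm l ≠ 0 := (knorm_pos hl).ne'
    have hM0 : knorm (k + l) ≠ 0 := (knorm_pos (Zpos_add hk hl)).ne'
    have hK2 := knorm_sq k
    have hL2 := knorm_sq l
    have hM2 := knorm_sq (k + l)
    simp only [advect, (hasFDerivAt_e0 k x).fderiv, (hasFDerivAt_e1 l x).fderiv,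
      (hasFDerivAt_e0 l x).fderiv, (hasFDerivAt_e1 k x).fderiv, hp.fderiv,
      ContinuousLinearMap.prod_apply, ContinuousLinearMap.smul_apply, phaseL_apply,
      smul_eq_mul, e0, e1, Prod.mk_add_mk, Prod.ext_iff, Prod.smul_mk, acoef]
    simp only [phase_add, Real.cos_add, Real.sin_add, Prod.fst_add, Prod.snd_add]
    push_cast
    push_cast [Prod.fst_add, Prod.snd_add] at hM2
    rw [hC, hd]
    have hK4 : knorm k ^ 4 = ((k.1:ℝ)^2+(k.2:ℝ)^2)^2 := by rw [show (4:ℕ)=2*2 from rfl, pow_mul, hK2]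
    have hK6 : knorm k ^ 6 = ((k.1:ℝ)^2+(k.2:ℝ)^2)^3 := by rw [show (6:ℕ)=2*3 from rfl, pow_mul, hK2]
    have hK8 : knorm k ^ 8 = ((k.1:ℝ)^2+(k.2:ℝ)^2)^4 := by rw [show (8:ℕ)=2*4 from rfl, pow_mul, hK2]
    have hL4 : knorm l ^ 4 = ((l.1:ℝ)^2+(l.2:ℝ)^2)^2 := by rw [show (4:ℕ)=2*2 from rfl, pow_mul, hL2]
    have hL6 : knorm l ^ 6 = ((l.1:ℝ)^2+(l.2:ℝ)^2)^3 := by rw [show (6:ℕ)=2*3 from rfl, pow_mul, hL2]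
    have hL8 : knorm l ^ 8 = ((l.1:ℝ)^2+(l.2:ℝ)^2)^4 := by rw [show (8:ℕ)=2*4 from rfl, pow_mul, hL2]
    have hM4 : knorm (k+l) ^ 4 = (((k.1:ℝ)+(l.1:ℝ))^2+((k.2:ℝ)+(l.2:ℝ))^2)^2 := by
      rw [show (4:ℕ)=2*2 from rfl, pow_mul, hM2]
    have hM6 : knorm (k+l) ^ 6 = (((k.1:ℝ)+(l.1:ℝ))^2+((k.2:ℝ)+(l.2:ℝ))^2)^3 := by
      rw [show (6:ℕ)=2*3 from rfl, pow_mul, hM2]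
    have hM8 : knorm (k+l) ^ 8 = (((k.1:ℝ)+(l.1:ℝ))^2+((k.2:ℝ)+(l.2:ℝ))^2)^4 := by
      rw [show (8:ℕ)=2*4 from rfl, pow_mul, hM2]
    constructor <;>
    · field_simp
      ring_nf
      simp only [hK8, hK6, hK4, hK2, hL8, hL6, hL4, hL2, hM8, hM6, hM4, hM2]
      ring
end

section
/- There exists a real constant c ≠ 0, independent of k and l, such that for all k, l ∈ ℤ²₊ with k ≠ l the vector field b(e_k¹, e_l¹) + b(e_l¹, e_k¹) + b(e_l⁰, e_k⁰) + b(e_k⁰, e_l⁰) equals a(k,l) · c · ((|l|² − |k|²)/|k−l|) · e¹_{k−l} modulo a gradient. (This is the third identity of the velocity-direction Lie bracket lemma: J_{k,l}^{1,1} + J_{l,k}^{0,0} = a c ((|l|²−|k|²)/|k−l|) ψ¹_{k−l}.) -/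
noncomputable def plin (k : ℤ × ℤ) : (ℝ × ℝ) →L[ℝ] ℝ :=
  (k.1:ℝ) • (ContinuousLinearMap.fst ℝ ℝ ℝ) + (k.2:ℝ) • (ContinuousLinearMap.snd ℝ ℝ ℝ)

lemma hasFDerivAt_phase_s2 (k : ℤ × ℤ) (x : ℝ × ℝ) : HasFDerivAt (phase k) (plin k) x := by
  have h1 : HasFDerivAt (fun y : ℝ × ℝ => y.1) (ContinuousLinearMap.fst ℝ ℝ ℝ) x := hasFDerivAt_fst
  have h2 : HasFDerivAt (fun y : ℝ × ℝ => y.2) (ContinuousLinearMap.snd ℝ ℝ ℝ) x := hasFDerivAt_snd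
  exact (h1.const_mul (k.1:ℝ)).add (h2.const_mul (k.2:ℝ))

lemma hasFDerivAt_sinphase (k : ℤ × ℤ) (x : ℝ × ℝ) :
    HasFDerivAt (fun y => Real.sin (phase k y)) (Real.cos (phase k x) • plin k) x :=
  (Real.hasDerivAt_sin (phase k x)).comp_hasFDerivAt x (hasFDerivAt_phase_s2 k x)

lemma hasFDerivAt_cosphase (k : ℤ × ℤ) (x : ℝ × ℝ) :
    HasFDerivAt (fun y => Real.cos (phase k y)) ((-Real.sin (phase k x)) • plin k) x :=
  (Real.hasDerivAt_cos (phase k x)).comp_hasFDerivAt x (hasFDerivAt_phase_s2 k x)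

lemma plin_apply (k : ℤ × ℤ) (v : ℝ × ℝ) : plin k v = (k.1:ℝ) * v.1 + (k.2:ℝ) * v.2 := by
  simp [plin]

lemma fderiv_mul_sinphase (c : ℝ) (k : ℤ × ℤ) (x v : ℝ × ℝ) :
    fderiv ℝ (fun y => c * Real.sin (phase k y)) x v =
      c * Real.cos (phase k x) * ((k.1:ℝ) * v.1 + (k.2:ℝ) * v.2) := by
  rw [((hasFDerivAt_sinphase k x).const_mul c).fderiv]
  simp [plin, smul_eq_mul]; ring

lemma fderiv_mul_cosphase (c : ℝ) (k : ℤ × ℤ) (x v : ℝ × ℝ) :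
    fderiv ℝ (fun y => c * Real.cos (phase k y)) x v =
      -(c * Real.sin (phase k x) * ((k.1:ℝ) * v.1 + (k.2:ℝ) * v.2)) := by
  rw [((hasFDerivAt_cosphase k x).const_mul c).fderiv]
  simp [plin, smul_eq_mul]; ring

lemma advect_e1 (u : ℝ × ℝ → ℝ × ℝ) (k : ℤ × ℤ) (x : ℝ × ℝ) :
    advect u (e1 k) x =
      (((-(k.2:ℝ)) / knorm k) * Real.cos (phase k x) * ((k.1:ℝ) * (u x).1 + (k.2:ℝ) * (u x).2),
       ((k.1:ℝ) / knorm k) * Real.cos (phase k x) * ((k.1:ℝ) * (u x).1 + (k.2:ℝ) * (u x).2)) := by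
  have h : HasFDerivAt (e1 k)
      (((((-(k.2:ℝ)) / knorm k) • (Real.cos (phase k x) • plin k)).prod
        (((k.1:ℝ) / knorm k) • (Real.cos (phase k x) • plin k)))) x :=
    HasFDerivAt.prodMk ((hasFDerivAt_sinphase k x).const_mul _) ((hasFDerivAt_sinphase k x).const_mul _)
  unfold advect
  rw [h.fderiv]
  simp [plin, smul_eq_mul]
  constructor <;> ring

lemma advect_e0 (u : ℝ × ℝ → ℝ × ℝ) (k : ℤ × ℤ) (x : ℝ × ℝ) :
    advect u (e0 k) x =
      (-(((k.2:ℝ)) / knorm k * Real.sin (phase k x) * ((k.1:ℝ) * (u x).1 + (k.2:ℝ) * (u x).2)),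
       -(((-(k.1:ℝ)) / knorm k) * Real.sin (phase k x) * ((k.1:ℝ) * (u x).1 + (k.2:ℝ) * (u x).2))) := by
  have h : HasFDerivAt (e0 k)
      ((((((k.2:ℝ)) / knorm k) • ((-Real.sin (phase k x)) • plin k)).prod
        (((-(k.1:ℝ)) / knorm k) • ((-Real.sin (phase k x)) • plin k)))) x :=
    HasFDerivAt.prodMk ((hasFDerivAt_cosphase k x).const_mul _) ((hasFDerivAt_cosphase k x).const_mul _)
  unfold advect
  rw [h.fderiv]
  simp [plin, smul_eq_mul]
  constructor <;> ring

lemma knorm_pos_s2 {j : ℤ × ℤ} (hj : j ≠ 0) : 0 < knorm j := by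
  have h : (j.1:ℝ) ≠ 0 ∨ (j.2:ℝ) ≠ 0 := by
    by_contra h
    push_neg at h
    exact hj (Prod.ext (by exact_mod_cast h.1) (by exact_mod_cast h.2))
  apply Real.sqrt_pos.2
  rcases h with h | h
  · nlinarith [abs_pos.mpr h, sq_abs (j.1:ℝ), sq_nonneg (j.2:ℝ), sq_nonneg (|(j.1:ℝ)|)]
  · nlinarith [abs_pos.mpr h, sq_abs (j.2:ℝ), sq_nonneg (j.1:ℝ), sq_nonneg (|(j.2:ℝ)|)]

lemma Zpos_ne_zero {j : ℤ × ℤ} (hj : j ∈ Zpos) : j ≠ 0 := by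
  rintro rfl
  simp [Zpos] at hj


theorem velocity_lie_bracket_diff_plus :
    ∃ c : ℝ, c ≠ 0 ∧ ∀ k l : ℤ × ℤ, k ∈ Zpos → l ∈ Zpos → k ≠ l →
      EqModGrad
        (fun x => advect (e1 k) (e1 l) x + advect (e1 l) (e1 k) x + advect (e0 l) (e0 k) x + advect (e0 k) (e0 l) x)
        (fun x => (acoef k l * c * ((knorm l ^ 2 - knorm k ^ 2) / knorm (k - l))) • e1 (k - l) x) := by
  refine ⟨1, one_ne_zero, fun k l hk hl hkl => ?_⟩
  have hk0 : k ≠ 0 := Zpos_ne_zero hk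
  have hl0 : l ≠ 0 := Zpos_ne_zero hl
  have hm0 : k - l ≠ 0 := sub_ne_zero.mpr hkl
  have hA : knorm k ≠ 0 := ne_of_gt (knorm_pos_s2 hk0)
  have hB : knorm l ≠ 0 := ne_of_gt (knorm_pos_s2 hl0)
  have hM : knorm (k - l) ≠ 0 := ne_of_gt (knorm_pos_s2 hm0)
  have hA2 : knorm k ^ 2 = (k.1:ℝ)^2 + (k.2:ℝ)^2 := Real.sq_sqrt (by positivity)
  have hB2 : knorm l ^ 2 = (l.1:ℝ)^2 + (l.2:ℝ)^2 := Real.sq_sqrt (by positivity)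
  have hMM : knorm (k - l) * knorm (k - l) = ((k.1:ℝ) - l.1)^2 + ((k.2:ℝ) - l.2)^2 := by
    rw [knorm, Real.mul_self_sqrt (by positivity)]
    push_cast [Prod.fst_sub, Prod.snd_sub]
    ring
  set D : ℝ := (k.1:ℝ) * (l.2:ℝ) - (k.2:ℝ) * (l.1:ℝ) with hD
  set pm : ℝ := ((k.1:ℝ) - l.1)^2 + ((k.2:ℝ) - l.2)^2 with hpm
  refine ⟨fun x => (2 * D^2 / (knorm k * knorm l * pm)) * Real.cos (phase (k - l) x), ?_, ?_, ?_⟩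
  · have hcd : ContDiff ℝ (⊤ : ℕ∞) (phase (k - l)) := by unfold phase; fun_prop
    exact contDiff_const.mul (Real.contDiff_cos.comp hcd)
  · intro x
    constructor
    · have : phase (k - l) (x.1 + 2 * Real.pi, x.2) = phase (k - l) x + ((k-l).1 : ℤ) * (2 * Real.pi) := by
        simp [phase]; ring
      simp only [this, Real.cos_add_int_mul_two_pi]
    · have : phase (k - l) (x.1, x.2 + 2 * Real.pi) = phase (k - l) x + ((k-l).2 : ℤ) * (2 * Real.pi) := by
        simp [phase]; ring
      simp only [this, Real.cos_add_int_mul_two_pi]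
  · intro x
    simp only
    rw [advect_e1 (e1 k) l x, advect_e1 (e1 l) k x, advect_e0 (e0 l) k x, advect_e0 (e0 k) l x,
        fderiv_mul_cosphase, fderiv_mul_cosphase]
    have hph : phase (k - l) x = phase k x - phase l x := by
      simp [phase, Prod.fst_sub, Prod.snd_sub]
      push_cast
      ring
    simp only [e0, e1, hph, Real.sin_sub, Real.cos_sub, Prod.mk_add_mk, Prod.smul_mk,
      smul_eq_mul, Prod.mk.injEq, Prod.fst_sub, Prod.snd_sub, Int.cast_sub, acoef, hA2, hB2]
    have hpm0 : pm ≠ 0 := by rw [← hMM]; exact mul_ne_zero hM hM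
    have key : ∀ a b c s : ℝ, a * (b / knorm (k - l)) * (c / knorm (k - l) * s) = a * b * c * s / pm := by
      intro a b c s
      rw [← hMM]
      ring
    constructor
    · rw [key]
      field_simp
      ring
    · rw [key]
      field_simp
      ring
end

section
/- Let ℓ ∈ 𝕊 and let w : [0,∞) → ℝ^d be a continuous function with w(0) = 0. Then for every T ≥ 0, the limit as ε → 0+ of ∫_0^T | (w(ℓ^ε(t)) − w(ℓ^ε(0))) − w(ℓ(t)) |² dt equals 0, where |·| denotes the Euclidean norm on ℝ^d. -/
open MeasureTheory Filter

/-- Membership in `𝕊`: a càdlàg nondecreasing function `ℓ : [0,∞) → [0,∞)` with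
`ℓ(0) = 0`, extended by `0` to the negative half-line. -/
def MemS (ℓ : ℝ → ℝ) : Prop :=
  (∀ t : ℝ, t ≤ 0 → ℓ t = 0) ∧
  (∀ t : ℝ, 0 ≤ ℓ t) ∧
  Monotone ℓ ∧
  (∀ t : ℝ, ContinuousWithinAt ℓ (Set.Ici t) t) ∧
  (∀ t : ℝ, ∃ L : ℝ, Tendsto ℓ (nhdsWithin t (Set.Iio t)) (nhds L))

/-- The regularization `ℓ^ε(t) = (1/ε) ∫_t^{t+ε} ℓ(s) ds + ε t`. -/
noncomputable def reg (ℓ : ℝ → ℝ) (ε t : ℝ) : ℝ :=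
  (1 / ε) * (∫ s in t..(t + ε), ℓ s) + ε * t

lemma avg_bounds (ℓ : ℝ → ℝ) (hmono : Monotone ℓ) {ε : ℝ} (hε : 0 < ε) (t : ℝ) :
    ℓ t ≤ (1 / ε) * (∫ s in t..(t + ε), ℓ s) ∧
      (1 / ε) * (∫ s in t..(t + ε), ℓ s) ≤ ℓ (t + ε) := by
  have hi : IntervalIntegrable ℓ volume t (t + ε) := hmono.intervalIntegrable
  have hle : t ≤ t + ε := by linarith
  have h1 : ∫ s in t..(t + ε), ℓ t ≤ ∫ s in t..(t + ε), ℓ s :=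
    intervalIntegral.integral_mono_on hle intervalIntegrable_const hi
      fun x hx => hmono hx.1
  have h2 : ∫ s in t..(t + ε), ℓ s ≤ ∫ s in t..(t + ε), ℓ (t + ε) :=
    intervalIntegral.integral_mono_on hle hi intervalIntegrable_const
      fun x hx => hmono hx.2
  rw [intervalIntegral.integral_const] at h1
  rw [intervalIntegral.integral_const] at h2
  simp only [add_sub_cancel_left, smul_eq_mul] at h1 h2
  constructor
  · rw [one_div, inv_mul_eq_div, le_div_iff₀ hε]
    linarith
  · rw [one_div, inv_mul_eq_div, div_le_iff₀ hε]
    linarith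

lemma reg_tendsto (ℓ : ℝ → ℝ) (hmono : Monotone ℓ)
    (hrc : ∀ t : ℝ, ContinuousWithinAt ℓ (Set.Ici t) t) (t : ℝ) :
    Tendsto (fun ε => reg ℓ ε t) (nhdsWithin 0 (Set.Ioi 0)) (nhds (ℓ t)) := by
  have hA : Tendsto (fun ε => (1 / ε) * (∫ s in t..(t + ε), ℓ s))
      (nhdsWithin 0 (Set.Ioi 0)) (nhds (ℓ t)) := by
    have hupper : Tendsto (fun ε => ℓ (t + ε)) (nhdsWithin 0 (Set.Ioi 0)) (nhds (ℓ t)) := by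
      have h1 : Tendsto (fun ε : ℝ => t + ε) (nhdsWithin 0 (Set.Ioi 0))
          (nhdsWithin t (Set.Ici t)) := by
        rw [tendsto_nhdsWithin_iff]
        constructor
        · have : Tendsto (fun ε : ℝ => t + ε) (nhds 0) (nhds (t + 0)) :=
            (continuous_const.add continuous_id).tendsto 0
          simpa using this.mono_left nhdsWithin_le_nhds
        · filter_upwards [self_mem_nhdsWithin] with ε (hε : 0 < ε)
          exact Set.mem_Ici.mpr (by linarith)
      exact (hrc t).tendsto.comp h1
    refine tendsto_of_tendsto_of_tendsto_of_le_of_le' tendsto_const_nhds hupper ?_ ?_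
    · filter_upwards [self_mem_nhdsWithin] with ε (hε : 0 < ε)
      exact (avg_bounds ℓ hmono hε t).1
    · filter_upwards [self_mem_nhdsWithin] with ε (hε : 0 < ε)
      exact (avg_bounds ℓ hmono hε t).2
  have hB : Tendsto (fun ε : ℝ => ε * t) (nhdsWithin 0 (Set.Ioi 0)) (nhds 0) := by
    have : Tendsto (fun ε : ℝ => ε * t) (nhds 0) (nhds (0 * t)) :=
      (continuous_id.mul continuous_const).tendsto 0
    simpa using this.mono_left nhdsWithin_le_nhds
  have := hA.add hB
  simpa [reg] using this

theorem reg_composition_L2_convergence (d : ℕ) (hd : 1 ≤ d)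
    (ℓ : ℝ → ℝ) (hℓ : MemS ℓ)
    (w : ℝ → EuclideanSpace ℝ (Fin d)) (hw : Continuous w) (hw0 : w 0 = 0)
    (T : ℝ) (hT : 0 ≤ T) :
    Tendsto (fun ε => ∫ t in (0 : ℝ)..T,
        ‖(w (reg ℓ ε t) - w (reg ℓ ε 0)) - w (ℓ t)‖ ^ 2)
      (nhdsWithin 0 (Set.Ioi 0)) (nhds 0) := by
  obtain ⟨hzero, hnonneg, hmono, hrc, -⟩ := hℓ
  -- bound for w on [0, M]
  set M : ℝ := ℓ (T + 1) + T with hM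
  have hM0 : 0 ≤ M := by have := hnonneg (T + 1); linarith
  obtain ⟨C, hC⟩ := (isCompact_Icc (a := (0:ℝ)) (b := M)).exists_bound_of_continuousOn
    hw.continuousOn
  have hC0 : 0 ≤ C := le_trans (norm_nonneg _) (hC 0 ⟨le_refl _, hM0⟩)
  -- reg values lie in [0, M] for ε ∈ (0,1], t ∈ [0,T]
  have hreg_mem : ∀ ε ∈ Set.Ioc (0:ℝ) 1, ∀ t ∈ Set.Icc (0:ℝ) T,
      reg ℓ ε t ∈ Set.Icc (0:ℝ) M := by
    intro ε hε t ht
    obtain ⟨h1, h2⟩ := avg_bounds ℓ hmono hε.1 t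
    constructor
    · have := hnonneg t
      have : (0:ℝ) ≤ ε * t := mul_nonneg hε.1.le ht.1
      unfold reg; nlinarith [hnonneg t]
    · have h3 : ℓ (t + ε) ≤ ℓ (T + 1) := hmono (by linarith [ht.2, hε.2])
      have h4 : ε * t ≤ T := by
        calc ε * t ≤ 1 * t := mul_le_mul_of_nonneg_right hε.2 ht.1
        _ = t := one_mul t
        _ ≤ T := ht.2
      unfold reg; linarith
  have hℓ_mem : ∀ t ∈ Set.Icc (0:ℝ) T, ℓ t ∈ Set.Icc (0:ℝ) M := by
    intro t ht
    refine ⟨hnonneg t, ?_⟩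
    have := hmono (show t ≤ T + 1 by linarith [ht.2])
    linarith [ht.1]
  -- continuity of t ↦ reg ℓ ε t
  have hreg_cont : ∀ ε : ℝ, ε ≠ 0 → Continuous (fun t => reg ℓ ε t) := by
    intro ε hε
    have hint : ∀ a b : ℝ, IntervalIntegrable ℓ volume a b := fun a b =>
      hmono.intervalIntegrable
    have hprim : Continuous fun x : ℝ => ∫ s in (0:ℝ)..x, ℓ s :=
      intervalIntegral.continuous_primitive hint 0
    have h1 : Continuous fun t : ℝ => ∫ s in t..(t + ε), ℓ s := by
      have : ∀ t : ℝ, (∫ s in t..(t + ε), ℓ s)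
          = (∫ s in (0:ℝ)..(t + ε), ℓ s) - ∫ s in (0:ℝ)..t, ℓ s := by
        intro t
        rw [eq_sub_iff_add_eq]
        rw [add_comm]
        exact intervalIntegral.integral_add_adjacent_intervals (hint 0 t) (hint t (t + ε))
      simp only [this]
      exact (hprim.comp (continuous_id.add continuous_const)).sub hprim
    unfold reg
    exact (continuous_const.mul h1).add (continuous_const.mul continuous_id)
  -- measurability of ℓ
  have hℓ_meas : Measurable ℓ := hmono.measurable
  have key : Tendsto (fun ε => ∫ t in (0:ℝ)..T,
      ‖(w (reg ℓ ε t) - w (reg ℓ ε 0)) - w (ℓ t)‖ ^ 2)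
      (nhdsWithin 0 (Set.Ioi 0))
      (nhds (∫ t in (0:ℝ)..T, (0:ℝ))) := by
    apply intervalIntegral.tendsto_integral_filter_of_dominated_convergence
      (bound := fun _ => (3 * C) ^ 2)
    · -- measurability
      filter_upwards [self_mem_nhdsWithin] with ε (hε : 0 < ε)
      have h1 : Continuous fun t => w (reg ℓ ε t) := hw.comp (hreg_cont ε hε.ne')
      have h2 : Measurable fun t => w (ℓ t) := hw.measurable.comp hℓ_meas
      have : Measurable fun t =>
          ‖(w (reg ℓ ε t) - w (reg ℓ ε 0)) - w (ℓ t)‖ ^ 2 := by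
        apply Measurable.pow_const
        exact ((h1.measurable.sub measurable_const).sub h2).norm
      exact this.aestronglyMeasurable
    · -- bound
      filter_upwards [Ioc_mem_nhdsGT_of_mem (Set.mem_Ico.mpr ⟨le_refl 0, zero_lt_one⟩)]
        with ε hε
      refine Filter.Eventually.of_forall fun t ht => ?_
      rw [Set.uIoc_of_le hT] at ht
      have htI : t ∈ Set.Icc (0:ℝ) T := ⟨ht.1.le, ht.2⟩
      have h0I : (0:ℝ) ∈ Set.Icc (0:ℝ) T := ⟨le_refl _, hT⟩
      have b1 : ‖w (reg ℓ ε t)‖ ≤ C := hC _ (hreg_mem ε hε t htI)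
      have b2 : ‖w (reg ℓ ε 0)‖ ≤ C := hC _ (hreg_mem ε hε 0 h0I)
      have b3 : ‖w (ℓ t)‖ ≤ C := hC _ (hℓ_mem t htI)
      have hnorm : ‖(w (reg ℓ ε t) - w (reg ℓ ε 0)) - w (ℓ t)‖ ≤ 3 * C := by
        calc ‖(w (reg ℓ ε t) - w (reg ℓ ε 0)) - w (ℓ t)‖
            ≤ ‖w (reg ℓ ε t) - w (reg ℓ ε 0)‖ + ‖w (ℓ t)‖ := norm_sub_le _ _
          _ ≤ (‖w (reg ℓ ε t)‖ + ‖w (reg ℓ ε 0)‖) + ‖w (ℓ t)‖ := by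
              gcongr; exact norm_sub_le _ _
          _ ≤ (C + C) + C := by gcongr
          _ = 3 * C := by ring
      have : ‖(w (reg ℓ ε t) - w (reg ℓ ε 0)) - w (ℓ t)‖ ^ 2 ≤ (3 * C) ^ 2 :=
        pow_le_pow_left₀ (norm_nonneg _) hnorm 2
      calc ‖‖(w (reg ℓ ε t) - w (reg ℓ ε 0)) - w (ℓ t)‖ ^ 2‖
          = ‖(w (reg ℓ ε t) - w (reg ℓ ε 0)) - w (ℓ t)‖ ^ 2 := by
            rw [Real.norm_eq_abs, abs_of_nonneg (by positivity)]
        _ ≤ (3 * C) ^ 2 := this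
    · exact intervalIntegrable_const
    · -- pointwise limit
      refine Filter.Eventually.of_forall fun t _ => ?_
      have h1 : Tendsto (fun ε => w (reg ℓ ε t)) (nhdsWithin 0 (Set.Ioi 0))
          (nhds (w (ℓ t))) := (hw.tendsto _).comp (reg_tendsto ℓ hmono hrc t)
      have h2 : Tendsto (fun ε => w (reg ℓ ε 0)) (nhdsWithin 0 (Set.Ioi 0))
          (nhds (w (ℓ 0))) := (hw.tendsto _).comp (reg_tendsto ℓ hmono hrc 0)
      have hℓ0 : ℓ 0 = 0 := hzero 0 le_rfl
      rw [hℓ0, hw0] at h2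
      have h3 : Tendsto (fun _ : ℝ => w (ℓ t)) (nhdsWithin 0 (Set.Ioi 0))
          (nhds (w (ℓ t))) := tendsto_const_nhds
      have := (((h1.sub h2).sub h3).norm.pow 2)
      simpa using this
  simpa using key
end

section
/- Let ℓ ∈ 𝕊 with η¹ < ∞. Then for every ε ∈ (0,1), one has η^ε < η¹ < ∞, and the first-passage value is exact: ν η^ε − c ℓ^ε(η^ε) = 1. -/
open MeasureTheory Filter

/-- The first passage time `η^ε = inf{t ≥ 0 : ν t − c ℓ^ε(t) > 1}`. -/
noncomputable def etaEps (ℓ : ℝ → ℝ) (ν c ε : ℝ) : ℝ :=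
  sInf {t : ℝ | 0 ≤ t ∧ 1 < ν * t - c * reg ℓ ε t}

/-- The first passage time `η = inf{t ≥ 0 : ν t − c ℓ(t) > 1}`. -/
noncomputable def eta (ℓ : ℝ → ℝ) (ν c : ℝ) : ℝ :=
  sInf {t : ℝ | 0 ≤ t ∧ 1 < ν * t - c * ℓ t}

lemma entry_lt (g : ℝ → ℝ) (hg : Continuous g) {s : ℝ} (hs : 0 < s) (hgs : 1 < g s) :
    sInf {t : ℝ | 0 ≤ t ∧ 1 < g t} < s := by
  obtain ⟨δ, hδ, hball⟩ := Metric.isOpen_iff.mp (isOpen_Ioi.preimage hg) s hgs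
  set r := min δ s with hr_def
  have hr : 0 < r := lt_min hδ hs
  have hrδ : r ≤ δ := min_le_left _ _
  have hrs : r ≤ s := min_le_right _ _
  have hmem : s - r / 2 ∈ {t : ℝ | 0 ≤ t ∧ 1 < g t} := by
    refine ⟨by linarith, hball ?_⟩
    rw [Metric.mem_ball, Real.dist_eq]
    have : s - r / 2 - s = -(r / 2) := by ring
    rw [this, abs_neg, abs_of_nonneg (by linarith)]
    linarith
  have hbdd : BddBelow {t : ℝ | 0 ≤ t ∧ 1 < g t} := ⟨0, fun t ht => ht.1⟩
  exact lt_of_le_of_lt (csInf_le hbdd hmem) (by linarith)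

lemma key_exact (g : ℝ → ℝ) (hg : Continuous g) (hg0 : g 0 < 1)
    (hS : {t : ℝ | 0 ≤ t ∧ 1 < g t}.Nonempty) :
    0 < sInf {t : ℝ | 0 ≤ t ∧ 1 < g t} ∧ g (sInf {t : ℝ | 0 ≤ t ∧ 1 < g t}) = 1 := by
  set S := {t : ℝ | 0 ≤ t ∧ 1 < g t} with hS_def
  have hbdd : BddBelow S := ⟨0, fun t ht => ht.1⟩
  set η := sInf S with hη_def
  have hη0 : 0 ≤ η := le_csInf hS fun t ht => ht.1
  have h1 : 1 ≤ g η := by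
    have hcl : η ∈ closure S := csInf_mem_closure hS hbdd
    have hsub : closure S ⊆ {t : ℝ | 1 ≤ g t} :=
      closure_minimal (fun t ht => ht.2.le) (isClosed_le continuous_const hg)
    exact hsub hcl
  have hηpos : 0 < η := by
    rcases hη0.lt_or_eq with h | h
    · exact h
    · exfalso; rw [← h] at h1; linarith
  refine ⟨hηpos, le_antisymm ?_ h1⟩
  by_contra h
  push_neg at h
  exact absurd (entry_lt g hg hηpos h) (lt_irrefl η)

lemma reg_cont (ℓ : ℝ → ℝ) (hℓ : MemS ℓ) (ε : ℝ) (hε : 0 < ε) :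
    Continuous (reg ℓ ε) := by
  have hint : ∀ a b : ℝ, IntervalIntegrable ℓ volume a b := fun a b =>
    hℓ.2.2.1.intervalIntegrable
  have hF : Continuous (fun x : ℝ => ∫ s in (0:ℝ)..x, ℓ s) :=
    intervalIntegral.continuous_primitive hint 0
  have heq : reg ℓ ε = fun t =>
      (1 / ε) * ((∫ s in (0:ℝ)..(t + ε), ℓ s) - ∫ s in (0:ℝ)..t, ℓ s) + ε * t := by
    funext t
    have := intervalIntegral.integral_add_adjacent_intervals (hint 0 t) (hint t (t + ε))
    simp only [reg]
    rw [← this]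
    ring
  rw [heq]
  exact (continuous_const.mul ((hF.comp (continuous_id.add continuous_const)).sub hF)).add
    (continuous_const.mul continuous_id)

lemma reg_lt (ℓ : ℝ → ℝ) (hℓ : MemS ℓ) {ε t : ℝ} (hε : 0 < ε) (hε1 : ε < 1) (ht : 0 < t) :
    reg ℓ ε t < reg ℓ 1 t := by
  have hmono := hℓ.2.2.1
  have hint : ∀ a b : ℝ, IntervalIntegrable ℓ volume a b := fun a b =>
    hmono.intervalIntegrable
  set A := ∫ s in t..(t + ε), ℓ s with hA
  set B := ∫ s in (t + ε)..(t + 1), ℓ s with hB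
  have hadd : A + B = ∫ s in t..(t + 1), ℓ s :=
    intervalIntegral.integral_add_adjacent_intervals (hint _ _) (hint _ _)
  set M := ℓ (t + ε) with hM
  have hAub : A ≤ ε * M := by
    have h1 : A ≤ ∫ _ in t..(t + ε), M := by
      apply intervalIntegral.integral_mono_on (by linarith) (hint _ _)
        intervalIntegrable_const
      intro x hx
      exact hmono hx.2
    rwa [intervalIntegral.integral_const, smul_eq_mul, add_sub_cancel_left] at h1
  have hBlb : (1 - ε) * M ≤ B := by
    have h1 : (∫ _ in (t + ε)..(t + 1), M) ≤ B := by
      apply intervalIntegral.integral_mono_on (by linarith) intervalIntegrable_const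
        (hint _ _)
      intro x hx
      exact hmono hx.1
    rw [intervalIntegral.integral_const, smul_eq_mul] at h1
    have : t + 1 - (t + ε) = 1 - ε := by ring
    rwa [this] at h1
  have hA0 : 0 ≤ A := intervalIntegral.integral_nonneg (by linarith) fun x _ => hℓ.2.1 x
  have hkey : (1 / ε) * A ≤ A + B := by
    rw [div_mul_eq_mul_div, one_mul, div_le_iff₀ hε]
    nlinarith
  simp only [reg, hadd.symm]
  have hεt : ε * t < 1 * t := by nlinarith
  calc (1 / ε) * A + ε * t ≤ (A + B) + ε * t := by linarith
    _ < (A + B) + 1 * t := by linarith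
    _ = 1 / 1 * (A + B) + 1 * t := by ring

theorem etaEps_lt_and_exact (ℓ : ℝ → ℝ) (hℓ : MemS ℓ)
    (ν c : ℝ) (hν : 0 < ν) (hc : 0 < c)
    (hfin : {t : ℝ | 0 ≤ t ∧ 1 < ν * t - c * reg ℓ 1 t}.Nonempty) :
    ∀ ε ∈ Set.Ioo (0 : ℝ) 1,
      etaEps ℓ ν c ε < etaEps ℓ ν c 1 ∧
      ν * etaEps ℓ ν c ε - c * reg ℓ ε (etaEps ℓ ν c ε) = 1 := by
  rintro ε ⟨hε0, hε1⟩
  have hcont : ∀ e : ℝ, 0 < e → Continuous (fun t => ν * t - c * reg ℓ e t) := fun e he =>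
    (continuous_const.mul continuous_id).sub (continuous_const.mul (reg_cont ℓ hℓ e he))
  have hg0 : ∀ e : ℝ, 0 < e → ν * 0 - c * reg ℓ e 0 < 1 := by
    intro e he
    have h1 : 0 ≤ ∫ s in (0:ℝ)..(0 + e), ℓ s :=
      intervalIntegral.integral_nonneg (by linarith) fun x _ => hℓ.2.1 x
    have h2 : 0 ≤ reg ℓ e 0 := by
      simp only [reg]
      have : 0 ≤ (1 / e) * ∫ s in (0:ℝ)..(0 + e), ℓ s := by positivity
      linarith
    nlinarith
  -- the ε = 1 passage time
  have hK1 := key_exact (fun t => ν * t - c * reg ℓ 1 t) (hcont 1 one_pos) (hg0 1 one_pos) hfin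
  set η1 := etaEps ℓ ν c 1 with hη1_def
  have hη1 : η1 = sInf {t : ℝ | 0 ≤ t ∧ 1 < ν * t - c * reg ℓ 1 t} := rfl
  rw [← hη1] at hK1
  obtain ⟨hη1pos, hη1exact⟩ := hK1
  -- η1 is in the ε-set
  have hE : ν * η1 - c * reg ℓ 1 η1 = 1 := hη1exact
  have hgε : 1 < ν * η1 - c * reg ℓ ε η1 := by
    have := reg_lt ℓ hℓ hε0 hε1 hη1pos
    nlinarith
  have hSε : {t : ℝ | 0 ≤ t ∧ 1 < ν * t - c * reg ℓ ε t}.Nonempty := ⟨η1, hη1pos.le, hgε⟩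
  have hKε := key_exact (fun t => ν * t - c * reg ℓ ε t) (hcont ε hε0) (hg0 ε hε0) hSε
  refine ⟨?_, hKε.2⟩
  exact entry_lt (fun t => ν * t - c * reg ℓ ε t) (hcont ε hε0) hη1pos hgε
end

section
/- Let ℓ ∈ 𝕊 with η¹ < ∞. Then limsup_{ε→0+} ∫_{(0, η^ε]} exp( −ν(η^ε − s) + c(ℓ^ε(η^ε) − ℓ^ε(s)) ) dℓ^ε(s) ≤ ℓ(η), where the integral is the Lebesgue–Stieltjes integral with respect to the continuous nondecreasing function ℓ^ε. -/
/-!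
Right continuity of `ℓ` gives `ℓ^ε(t) → ℓ(t)` as `ε → 0+`, so every `t` with
`ν t − c ℓ(t) > 1` satisfies `ν t − c ℓ^ε(t) > 1` for small `ε`, whence `η^ε ≤ t`.
Since `t ↦ ν t − c ℓ^ε(t)` is continuous, it is at most `1` on `[0, η^ε)` and at least `1`
at `η^ε`; hence the exponent is nonpositive and the integral is at most the `dℓ^ε`-mass of
`(0, η^ε]`, which is at most `ℓ^ε(η^ε) ≤ (ν η^ε − 1)/c ≤ (ν t − 1)/c`. Taking the infimum over
such `t` gives `c · limsup + 1 ≤ ν η`, and `ν η − 1 ≤ c ℓ(η)` because `t ↦ ν t − c ℓ(t)` has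
only downward jumps.
-/

open MeasureTheory Filter

open Set Topology

/-- `etaEps ℓ ν c ε` and `eta ℓ ν c` unfold to `firstPassage` of `t ↦ ν t − c ℓ^ε(t)` and of
`t ↦ ν t − c ℓ(t)`. -/
noncomputable def firstPassage (f : ℝ → ℝ) : ℝ :=
  sInf {t : ℝ | 0 ≤ t ∧ 1 < f t}

section FirstPassage

variable {f : ℝ → ℝ}

lemma firstPassage_nonneg (f : ℝ → ℝ) : 0 ≤ firstPassage f :=
  Real.sInf_nonneg fun _ ht => ht.1

lemma firstPassage_le {t : ℝ} (ht₀ : 0 ≤ t) (ht : 1 < f t) : firstPassage f ≤ t :=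
  csInf_le ⟨0, fun _ hs => hs.1⟩ ⟨ht₀, ht⟩

lemma le_firstPassage {a : ℝ} (hne : ∃ t, 0 ≤ t ∧ 1 < f t)
    (h : ∀ t, 0 ≤ t → 1 < f t → a ≤ t) : a ≤ firstPassage f :=
  le_csInf hne fun t ht => h t ht.1 ht.2

lemma apply_le_one_of_lt_firstPassage {s : ℝ} (hs₀ : 0 ≤ s) (hs : s < firstPassage f) :
    f s ≤ 1 :=
  not_lt.1 fun h => (firstPassage_le hs₀ h).not_gt hs

lemma one_le_apply_firstPassage (hf : Continuous f) (hne : ∃ t, 0 ≤ t ∧ 1 < f t) :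
    1 ≤ f (firstPassage f) := by
  have hclosed : IsClosed {t : ℝ | 0 ≤ t ∧ 1 ≤ f t} :=
    isClosed_Ici.inter (isClosed_le continuous_const hf)
  exact (hclosed.closure_subset_iff.2 (fun t ht => ⟨ht.1, ht.2.le⟩)
    (csInf_mem_closure hne ⟨0, fun _ ht => ht.1⟩)).2

lemma apply_le_apply_firstPassage (hf : Continuous f) (hne : ∃ t, 0 ≤ t ∧ 1 < f t) {s : ℝ}
    (hs₀ : 0 ≤ s) (hs : s ≤ firstPassage f) : f s ≤ f (firstPassage f) := by
  rcases hs.lt_or_eq with hlt | rfl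
  · exact (apply_le_one_of_lt_firstPassage hs₀ hlt).trans (one_le_apply_firstPassage hf hne)
  · exact le_rfl

/-- A continuous function minus a monotone one has only downward jumps, so it has not yet
exceeded `1` at its first passage time. -/
lemma apply_firstPassage_le_one_of_continuous_sub_monotone {h g : ℝ → ℝ} (hh : Continuous h)
    (hg : Monotone g) (h₀ : h 0 - g 0 ≤ 1) :
    h (firstPassage fun t => h t - g t) - g (firstPassage fun t => h t - g t) ≤ 1 := by
  set T := firstPassage fun t => h t - g t
  rcases (firstPassage_nonneg _ : 0 ≤ T).eq_or_lt with hT | hT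
  · rwa [show T = 0 from hT.symm]
  · have hbefore : ∀ᶠ t in 𝓝[<] T, h t - g T ≤ 1 := by
      filter_upwards [Ioo_mem_nhdsLT hT] with t ht
      linarith [apply_le_one_of_lt_firstPassage (f := fun t => h t - g t) ht.1.le ht.2,
        hg ht.2.le]
    exact le_of_tendsto (((hh.tendsto T).mono_left nhdsWithin_le_nhds).sub_const (g T)) hbefore

end FirstPassage

section Regularization

variable {ℓ : ℝ → ℝ} {ε : ℝ}

lemma le_reg (hm : Monotone ℓ) (hε : 0 < ε) {t : ℝ} (ht : 0 ≤ t) : ℓ t ≤ reg ℓ ε t := by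
  have h := intervalIntegral.integral_mono_on (μ := volume)
    (le_add_of_nonneg_right (a := t) hε.le)
    intervalIntegrable_const hm.intervalIntegrable fun s hs => hm hs.1
  rw [intervalIntegral.integral_const, smul_eq_mul, add_sub_cancel_left] at h
  calc ℓ t = 1 / ε * (ε * ℓ t) := by field_simp
    _ ≤ 1 / ε * ∫ s in t..(t + ε), ℓ s := by gcongr
    _ ≤ reg ℓ ε t := le_add_of_nonneg_right (by positivity)

lemma reg_le (hm : Monotone ℓ) (hε : 0 < ε) (t : ℝ) : reg ℓ ε t ≤ ℓ (t + ε) + ε * t := by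
  have h := intervalIntegral.integral_mono_on (μ := volume)
    (le_add_of_nonneg_right (a := t) hε.le)
    hm.intervalIntegrable intervalIntegrable_const fun s hs => hm hs.2
  rw [intervalIntegral.integral_const, smul_eq_mul, add_sub_cancel_left] at h
  have hmean : 1 / ε * ∫ s in t..(t + ε), ℓ s ≤ ℓ (t + ε) :=
    calc 1 / ε * ∫ s in t..(t + ε), ℓ s ≤ 1 / ε * (ε * ℓ (t + ε)) := by gcongr
      _ = ℓ (t + ε) := by field_simp
  unfold reg
  linarith

lemma continuous_reg (hm : Monotone ℓ) (ε : ℝ) : Continuous (reg ℓ ε) := by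
  have hprim : Continuous fun x => ∫ s in (0 : ℝ)..x, ℓ s :=
    intervalIntegral.continuous_primitive (fun _ _ => hm.intervalIntegrable) 0
  have hwindow : (fun t => ∫ s in t..(t + ε), ℓ s)
      = fun t => (∫ s in (0 : ℝ)..(t + ε), ℓ s) - ∫ s in (0 : ℝ)..t, ℓ s := by
    ext t
    rw [intervalIntegral.integral_interval_sub_left hm.intervalIntegrable hm.intervalIntegrable]
  have hwindow_cont : Continuous fun t => ∫ s in t..(t + ε), ℓ s := by
    rw [hwindow]
    exact (hprim.comp (continuous_add_const ε)).sub hprim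
  unfold reg
  fun_prop

lemma tendsto_reg_nhdsGT (hm : Monotone ℓ) {t : ℝ} (hrc : ContinuousWithinAt ℓ (Ici t) t)
    (ht : 0 ≤ t) : Tendsto (fun ε => reg ℓ ε t) (𝓝[>] 0) (𝓝 (ℓ t)) := by
  have hshift : Tendsto (fun ε => t + ε) (𝓝[>] 0) (𝓝[≥] t) := by
    refine tendsto_nhdsWithin_of_tendsto_nhds_of_eventually_within _ ?_ ?_
    · simpa using ((continuous_const_add t).tendsto 0).mono_left nhdsWithin_le_nhds
    · filter_upwards [self_mem_nhdsWithin] with ε (hε : 0 < ε)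
      exact le_add_of_nonneg_right hε.le
  have hupper : Tendsto (fun ε => ℓ (t + ε) + ε * t) (𝓝[>] 0) (𝓝 (ℓ t)) := by
    simpa using (hrc.tendsto.comp hshift).add
      ((tendsto_id.mono_left nhdsWithin_le_nhds).mul_const t)
  refine tendsto_of_tendsto_of_tendsto_of_le_of_le' tendsto_const_nhds hupper ?_ ?_
  all_goals filter_upwards [self_mem_nhdsWithin] with ε (hε : 0 < ε)
  · exact le_reg hm hε ht
  · exact reg_le hm hε t

end Regularization

lemma StieltjesFunction.measureReal_Ioc (F : StieltjesFunction ℝ) {a b : ℝ} (hab : a ≤ b) :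
    F.measure.real (Ioc a b) = F b - F a := by
  rw [Measure.real, F.measure_Ioc, ENNReal.toReal_ofReal (sub_nonneg.2 (F.mono hab))]

lemma setIntegral_le_measureReal_of_le_one {α : Type*} [MeasurableSpace α] {μ : Measure α}
    {s : Set α} {f : α → ℝ} (hs : μ s < ⊤) (hf₀ : ∀ x ∈ s, 0 ≤ f x) (hf₁ : ∀ x ∈ s, f x ≤ 1) :
    ∫ x in s, f x ∂μ ≤ μ.real s := by
  have hnorm := norm_setIntegral_le_of_norm_le_const hs fun x hx =>
    (Real.norm_of_nonneg (hf₀ x hx)).trans_le (hf₁ x hx)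
  rw [one_mul] at hnorm
  exact (Real.le_norm_self _).trans hnorm

section Passage

variable {ℓ : ℝ → ℝ} {ν c ε : ℝ}

lemma continuous_passage_reg (hm : Monotone ℓ) :
    Continuous fun t => ν * t - c * reg ℓ ε t := by
  have := continuous_reg hm ε
  fun_prop

lemma setIntegral_exp_le_reg_etaEps (hm : Monotone ℓ) (hℓ₀ : 0 ≤ ℓ 0) (hε : 0 < ε)
    (G : StieltjesFunction ℝ) (hG : ∀ t, G t = reg ℓ ε t)
    (hne : ∃ t, 0 ≤ t ∧ 1 < ν * t - c * reg ℓ ε t) :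
    ∫ s in Ioc (0 : ℝ) (etaEps ℓ ν c ε),
        Real.exp (-(ν * (etaEps ℓ ν c ε - s)) + c * (reg ℓ ε (etaEps ℓ ν c ε) - reg ℓ ε s))
          ∂G.measure ≤ reg ℓ ε (etaEps ℓ ν c ε) := by
  set T := etaEps ℓ ν c ε
  have hT₀ : 0 ≤ T := firstPassage_nonneg _
  have hexp : ∀ s ∈ Ioc 0 T,
      Real.exp (-(ν * (T - s)) + c * (reg ℓ ε T - reg ℓ ε s)) ≤ 1 := fun s hs => by
    have : ν * s - c * reg ℓ ε s ≤ ν * T - c * reg ℓ ε T :=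
      apply_le_apply_firstPassage (continuous_passage_reg hm) hne hs.1.le hs.2
    rw [Real.exp_le_one_iff]
    linarith
  calc _ ≤ G.measure.real (Ioc 0 T) := setIntegral_le_measureReal_of_le_one
        (by rw [G.measure_Ioc]; exact ENNReal.ofReal_lt_top)
        (fun _ _ => (Real.exp_pos _).le) hexp
    _ = reg ℓ ε T - reg ℓ ε 0 := by rw [G.measureReal_Ioc hT₀, hG, hG]
    _ ≤ reg ℓ ε T := by linarith [le_reg hm hε le_rfl]

lemma eventually_setIntegral_exp_le (hm : Monotone ℓ) (hℓ₀ : 0 ≤ ℓ 0) (hν : 0 ≤ ν)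
    (hc : 0 < c)
    (G : ℝ → StieltjesFunction ℝ) (hG : ∀ ε ∈ Ioc (0 : ℝ) 1, ∀ t, G ε t = reg ℓ ε t)
    {t : ℝ} (hrc : ContinuousWithinAt ℓ (Ici t) t) (ht₀ : 0 ≤ t) (ht : 1 < ν * t - c * ℓ t) :
    ∀ᶠ ε in 𝓝[>] 0, ∫ s in Ioc (0 : ℝ) (etaEps ℓ ν c ε),
        Real.exp (-(ν * (etaEps ℓ ν c ε - s)) + c * (reg ℓ ε (etaEps ℓ ν c ε) - reg ℓ ε s))
          ∂(G ε).measure ≤ (ν * t - 1) / c := by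
  have hpassage : ∀ᶠ ε in 𝓝[>] 0, 1 < ν * t - c * reg ℓ ε t :=
    (((tendsto_reg_nhdsGT hm hrc ht₀).const_mul c).const_sub (ν * t)).eventually_const_lt ht
  filter_upwards [hpassage, Ioc_mem_nhdsGT one_pos] with ε hεt hε
  have hne : ∃ t, 0 ≤ t ∧ 1 < ν * t - c * reg ℓ ε t := ⟨t, ht₀, hεt⟩
  have hT₁ : 1 ≤ ν * etaEps ℓ ν c ε - c * reg ℓ ε (etaEps ℓ ν c ε) :=
    one_le_apply_firstPassage (continuous_passage_reg hm) hne
  have hTt : etaEps ℓ ν c ε ≤ t := firstPassage_le ht₀ hεt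
  have hI := setIntegral_exp_le_reg_etaEps hm hℓ₀ hε.1 (G ε) (hG ε hε) hne
  rw [le_div_iff₀ hc]
  linarith [mul_le_mul_of_nonneg_right hI hc.le, mul_le_mul_of_nonneg_left hTt hν]

lemma le_apply_eta_of_forall_le (hm : Monotone ℓ) (hℓ₀ : 0 ≤ ℓ 0) (hν : 0 < ν) (hc : 0 < c)
    (hne : ∃ t, 0 ≤ t ∧ 1 < ν * t - c * ℓ t) {L : ℝ}
    (hL : ∀ t, 0 ≤ t → 1 < ν * t - c * ℓ t → L ≤ (ν * t - 1) / c) : L ≤ ℓ (eta ℓ ν c) := by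
  have hη : (c * L + 1) / ν ≤ eta ℓ ν c := le_firstPassage hne fun t ht₀ ht => by
    have hLt := hL t ht₀ ht
    rw [le_div_iff₀ hc] at hLt
    rw [div_le_iff₀ hν]
    linarith
  have hjump : ν * eta ℓ ν c - c * ℓ (eta ℓ ν c) ≤ 1 :=
    apply_firstPassage_le_one_of_continuous_sub_monotone (continuous_const_mul ν)
      (hm.const_mul hc.le) (by linarith [mul_nonneg hc.le hℓ₀])
  rw [div_le_iff₀ hν] at hη
  exact le_of_mul_le_mul_left (by linarith) hc

end Passage

theorem limsup_stieltjes_integral_le (ℓ : ℝ → ℝ) (hℓ : MemS ℓ)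
    (ν c : ℝ) (hν : 0 < ν) (hc : 0 < c)
    (hfin : {t : ℝ | 0 ≤ t ∧ 1 < ν * t - c * reg ℓ 1 t}.Nonempty)
    (G : ℝ → StieltjesFunction ℝ)
    (hG : ∀ ε ∈ Set.Ioc (0 : ℝ) 1, ∀ t : ℝ, G ε t = reg ℓ ε t) :
    limsup (fun ε =>
        ∫ s in Set.Ioc (0 : ℝ) (etaEps ℓ ν c ε),
          Real.exp (-(ν * (etaEps ℓ ν c ε - s))
            + c * (reg ℓ ε (etaEps ℓ ν c ε) - reg ℓ ε s)) ∂((G ε).measure))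
      (nhdsWithin 0 (Set.Ioi 0)) ≤ ℓ (eta ℓ ν c) := by
  obtain ⟨hℓ₀, -, hm, hrc, -⟩ := hℓ
  have hℓ₀' : 0 ≤ ℓ 0 := (hℓ₀ 0 le_rfl).ge
  have hne : ∃ t, 0 ≤ t ∧ 1 < ν * t - c * ℓ t := by
    obtain ⟨t, ht₀, ht⟩ := hfin
    exact ⟨t, ht₀, by linarith [mul_le_mul_of_nonneg_left (le_reg hm one_pos ht₀) hc.le]⟩
  refine le_apply_eta_of_forall_le hm hℓ₀' hν hc hne fun t ht₀ ht => limsup_le_of_le ?_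
    (eventually_setIntegral_exp_le hm hℓ₀' hν.le hc G hG (hrc t) ht₀ ht)
  exact (isBoundedUnder_of
    ⟨0, fun _ => integral_nonneg fun _ => (Real.exp_pos _).le⟩).isCoboundedUnder_le
end
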